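/- Define φ_n : ℝ → ℝ by φ_n(x) := ∫_0^{max(x,0)} ∫_0^y ρ_n(z) dz dy, where ρ_n : [0,∞) → ℝ is continuous, satisfies 0 ≤ ρ_n(x) ≤ (1/(n x)) · 1_{(0,1]}(x), and ∫_0^∞ ρ_n(x) dx = 1. Then for every real x: φ_n(x) ≥ 0, x·φ_n'(x) ≥ 0, x·φ_n''(x) ≥ 0 (where defined), and as n → ∞, φ_n(x) → max(x,0), x·φ_n'(x) → max(x,0), and x·φ_n''(x) → 0. -/

import Mathlib

open Filter MeasureTheory Set Topology

/-! The primitive `ψ_n = ∫₀ ρ_n` vanishes on `(-∞, 0]`, increases, and equals `1` from `1` on; the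
bound `ρ_n ≤ 1/(n x)` gives `1 - ψ_n(y) ≤ -log y / n` on `(0, 1]`, so `ψ_n → 1` on `(0, ∞)`.
Since `φ_n = ∫₀ ψ_n`, we have `φ_n' = ψ_n` and `φ_n'' = ρ_n`; the limits then follow by dominated
convergence (`0 ≤ ψ_n ≤ 1`), from `ψ_n → 1`, and from `0 ≤ x ρ_n(x) ≤ 1/n`. -/

namespace YamadaWatanabe

noncomputable def primitive (f : ℝ → ℝ) (y : ℝ) : ℝ := ∫ z in (0:ℝ)..y, f z

section Primitive

variable {f : ℝ → ℝ}

theorem primitive_eq_zero_of_nonpos (hf : ∀ x ≤ 0, f x = 0) {y : ℝ} (hy : y ≤ 0) :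
    primitive f y = 0 := by
  rw [primitive, intervalIntegral.integral_symm, neg_eq_zero]
  refine (intervalIntegral.integral_congr fun z hz => hf z ?_).trans (by simp)
  rw [uIcc_of_le hy] at hz
  exact hz.2

theorem primitive_max_zero (hf : ∀ x ≤ 0, f x = 0) (x : ℝ) :
    primitive f (max x 0) = primitive f x := by
  rcases le_total 0 x with hx | hx
  · rw [max_eq_left hx]
  · rw [max_eq_right hx, primitive_eq_zero_of_nonpos hf le_rfl, primitive_eq_zero_of_nonpos hf hx]

theorem primitive_nonneg (hf : ∀ x ≤ 0, f x = 0) (hnn : ∀ x, 0 ≤ f x) (y : ℝ) :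
    0 ≤ primitive f y := by
  rcases le_total 0 y with hy | hy
  · exact intervalIntegral.integral_nonneg hy fun z _ => hnn z
  · rw [primitive_eq_zero_of_nonpos hf hy]

theorem primitive_mono (hc : Continuous f) (hnn : ∀ x, 0 ≤ f x) : Monotone (primitive f) :=
  fun a b hab => by
    have h := intervalIntegral.integral_interval_sub_left (μ := volume)
      (hc.intervalIntegrable 0 b) (hc.intervalIntegrable 0 a)
    have := intervalIntegral.integral_nonneg (μ := volume) hab fun z _ => hnn z
    rw [primitive, primitive]
    linarith

theorem continuous_primitive (hc : Continuous f) : Continuous (primitive f) :=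
  intervalIntegral.continuous_primitive (fun a b => hc.intervalIntegrable a b) 0

theorem deriv_primitive (hc : Continuous f) : deriv (primitive f) = f :=
  funext (hc.deriv_integral f 0)

theorem mul_apply_nonneg (hf : ∀ x ≤ 0, f x = 0) (hnn : ∀ x, 0 ≤ f x) (x : ℝ) :
    0 ≤ x * f x := by
  rcases le_total 0 x with hx | hx
  · exact mul_nonneg hx (hnn x)
  · rw [hf x hx, mul_zero]

end Primitive

structure IsKernel (c : ℝ) (f : ℝ → ℝ) : Prop where
  continuous : Continuous f
  eq_zero_of_notMem : ∀ x ∉ Ioc (0:ℝ) 1, f x = 0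
  nonneg_le : ∀ x ∈ Ioc (0:ℝ) 1, 0 ≤ f x ∧ f x ≤ 1 / (c * x)
  integral_Ioi : ∫ x in Ioi (0:ℝ), f x = 1

namespace IsKernel

variable {c : ℝ} {f : ℝ → ℝ}

theorem eq_zero_of_nonpos (hf : IsKernel c f) : ∀ x ≤ 0, f x = 0 :=
  fun x hx => hf.eq_zero_of_notMem x fun h => hx.not_gt h.1

theorem nonneg (hf : IsKernel c f) (x : ℝ) : 0 ≤ f x := by
  by_cases hx : x ∈ Ioc (0:ℝ) 1
  · exact (hf.nonneg_le x hx).1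
  · rw [hf.eq_zero_of_notMem x hx]

theorem primitive_eq_zero_of_nonpos (hf : IsKernel c f) : ∀ x ≤ 0, primitive f x = 0 :=
  fun _ => YamadaWatanabe.primitive_eq_zero_of_nonpos hf.eq_zero_of_nonpos

theorem primitive_nonneg (hf : IsKernel c f) : ∀ x, 0 ≤ primitive f x :=
  YamadaWatanabe.primitive_nonneg hf.eq_zero_of_nonpos hf.nonneg

theorem primitive_primitive_max_zero (hf : IsKernel c f) (x : ℝ) :
    primitive (primitive f) (max x 0) = primitive (primitive f) x :=
  primitive_max_zero hf.primitive_eq_zero_of_nonpos x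

theorem deriv_primitive_primitive (hf : IsKernel c f) :
    deriv (primitive (primitive f)) = primitive f :=
  deriv_primitive (continuous_primitive hf.continuous)

theorem deriv_deriv_primitive_primitive (hf : IsKernel c f) :
    deriv (deriv (primitive (primitive f))) = f := by
  rw [hf.deriv_primitive_primitive, deriv_primitive hf.continuous]

theorem primitive_eq_one_of_one_le (hf : IsKernel c f) {y : ℝ} (hy : 1 ≤ y) :
    primitive f y = 1 := by
  rw [primitive, intervalIntegral.integral_of_le (zero_le_one.trans hy), ← hf.integral_Ioi]
  refine (setIntegral_eq_of_subset_of_forall_sdiff_eq_zero measurableSet_Ioi Ioc_subset_Ioi_self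
    fun x hx => hf.eq_zero_of_notMem x fun h => hx.2 ⟨h.1, h.2.trans hy⟩).symm

theorem primitive_le_one (hf : IsKernel c f) (y : ℝ) : primitive f y ≤ 1 :=
  calc primitive f y ≤ primitive f (max y 1) :=
        primitive_mono hf.continuous hf.nonneg (le_max_left y 1)
    _ = 1 := hf.primitive_eq_one_of_one_le (le_max_right y 1)

theorem one_add_log_div_le_primitive (hf : IsKernel c f) {y : ℝ} (hy : y ∈ Ioc (0:ℝ) 1) :
    1 + Real.log y / c ≤ primitive f y := by
  have hsplit := intervalIntegral.integral_add_adjacent_intervals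
    (hf.continuous.intervalIntegrable (μ := volume) 0 y) (hf.continuous.intervalIntegrable y 1)
  have hinv : IntervalIntegrable (fun z : ℝ => 1 / (c * z)) volume y 1 := by
    simp_rw [one_div, mul_inv]
    refine (continuousOn_const.mul (continuousOn_inv₀.mono fun z hz => ?_)).intervalIntegrable
    rw [uIcc_of_le hy.2] at hz
    exact (hy.1.trans_le hz.1).ne'
  have htail : ∫ z in y..1, f z ≤ ∫ z in y..1, 1 / (c * z) :=
    intervalIntegral.integral_mono_on hy.2 (hf.continuous.intervalIntegrable y 1) hinv
      fun z hz => (hf.nonneg_le z ⟨hy.1.trans_le hz.1, hz.2⟩).2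
  have hlog : ∫ z in y..1, 1 / (c * z) = - (Real.log y / c) := by
    simp_rw [one_div, mul_inv]
    rw [intervalIntegral.integral_const_mul, integral_inv (by simpa [uIcc_of_le hy.2] using hy.1),
      one_div, Real.log_inv]
    ring
  rw [← primitive, ← primitive, hf.primitive_eq_one_of_one_le le_rfl] at hsplit
  linarith

theorem mul_apply_le (hf : IsKernel c f) (hc : 0 ≤ c) (x : ℝ) : x * f x ≤ 1 / c := by
  by_cases hx : x ∈ Ioc (0:ℝ) 1
  · calc x * f x ≤ x * (1 / (c * x)) := mul_le_mul_of_nonneg_left (hf.nonneg_le x hx).2 hx.1.le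
      _ = 1 / c := by
        rw [one_div, one_div, mul_inv, mul_left_comm, mul_inv_cancel₀ hx.1.ne', mul_one]
  · rw [hf.eq_zero_of_notMem x hx, mul_zero]
    positivity

end IsKernel

section Limits

variable {ρ : ℕ → ℝ → ℝ}

theorem tendsto_primitive_one (hρ : ∀ᶠ n : ℕ in atTop, IsKernel n (ρ n)) {y : ℝ} (hy : 0 < y) :
    Tendsto (fun n => primitive (ρ n) y) atTop (𝓝 1) := by
  rcases le_or_gt 1 y with h1 | h1
  · exact tendsto_const_nhds.congr' (hρ.mono fun _ hn => (hn.primitive_eq_one_of_one_le h1).symm)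
  · have hlow : Tendsto (fun n : ℕ => 1 + Real.log y / n) atTop (𝓝 1) := by
      simpa using (tendsto_const_div_atTop_nhds_zero_nat (Real.log y)).const_add 1
    exact tendsto_of_tendsto_of_tendsto_of_le_of_le' hlow tendsto_const_nhds
      (hρ.mono fun _ hn => hn.one_add_log_div_le_primitive ⟨hy, h1.le⟩)
      (hρ.mono fun _ hn => hn.primitive_le_one y)

theorem tendsto_primitive_primitive (hρ : ∀ᶠ n : ℕ in atTop, IsKernel n (ρ n)) (x : ℝ) :
    Tendsto (fun n => primitive (primitive (ρ n)) x) atTop (𝓝 (max x 0)) := by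
  rcases le_total x 0 with hx | hx
  · rw [max_eq_right hx]
    exact tendsto_const_nhds.congr'
      (hρ.mono fun _ hn => (primitive_eq_zero_of_nonpos hn.primitive_eq_zero_of_nonpos hx).symm)
  · have hDCT := intervalIntegral.tendsto_integral_filter_of_dominated_convergence (μ := volume)
      (F := fun n => primitive (ρ n)) (f := fun _ => 1) (fun _ => 1)
      (hρ.mono fun _ hn => (continuous_primitive hn.continuous).aestronglyMeasurable)
      (hρ.mono fun _ hn => ae_of_all _ fun z _ => by
        rw [Real.norm_eq_abs, abs_le]
        exact ⟨by linarith [hn.primitive_nonneg z], hn.primitive_le_one z⟩)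
      intervalIntegrable_const
      (ae_of_all _ fun z hz => tendsto_primitive_one hρ (by rw [uIoc_of_le hx] at hz; exact hz.1))
    simpa [max_eq_left hx, primitive] using hDCT

theorem tendsto_mul_primitive (hρ : ∀ᶠ n : ℕ in atTop, IsKernel n (ρ n)) (x : ℝ) :
    Tendsto (fun n => x * primitive (ρ n) x) atTop (𝓝 (max x 0)) := by
  rcases le_or_gt x 0 with hx | hx
  · rw [max_eq_right hx]
    exact tendsto_const_nhds.congr'
      (hρ.mono fun _ hn => by simp [hn.primitive_eq_zero_of_nonpos x hx])
  · simpa [max_eq_left hx.le] using (tendsto_primitive_one hρ hx).const_mul x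

theorem tendsto_mul_apply (hρ : ∀ᶠ n : ℕ in atTop, IsKernel n (ρ n)) (x : ℝ) :
    Tendsto (fun n => x * ρ n x) atTop (𝓝 0) :=
  tendsto_of_tendsto_of_tendsto_of_le_of_le' tendsto_const_nhds
    (tendsto_const_div_atTop_nhds_zero_nat 1)
    (hρ.mono fun _ hn => mul_apply_nonneg hn.eq_zero_of_nonpos hn.nonneg x)
    (hρ.mono fun n hn => hn.mul_apply_le n.cast_nonneg x)

end Limits

end YamadaWatanabe

open YamadaWatanabe

theorem stmt2 (ρ : ℕ → ℝ → ℝ) (φ : ℕ → ℝ → ℝ)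
    (hcont : ∀ n, 1 ≤ n → Continuous (ρ n))
    (hsupp : ∀ n, 1 ≤ n → ∀ x : ℝ, x ∉ Set.Ioc (0:ℝ) 1 → ρ n x = 0)
    (hbound : ∀ n, 1 ≤ n → ∀ x ∈ Set.Ioc (0:ℝ) 1,
      0 ≤ ρ n x ∧ ρ n x ≤ 1 / ((n : ℝ) * x))
    (hint : ∀ n, 1 ≤ n → (∫ x in Set.Ioi (0:ℝ), ρ n x) = 1)
    (hφ : ∀ n x, φ n x = ∫ y in (0:ℝ)..(max x 0), ∫ z in (0:ℝ)..y, ρ n z) :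
    (∀ n, 1 ≤ n → ∀ x : ℝ,
      0 ≤ φ n x ∧ 0 ≤ x * deriv (φ n) x ∧ 0 ≤ x * deriv (deriv (φ n)) x) ∧
    (∀ x : ℝ,
      Tendsto (fun n => φ n x) atTop (nhds (max x 0)) ∧
      Tendsto (fun n => x * deriv (φ n) x) atTop (nhds (max x 0)) ∧
      Tendsto (fun n => x * deriv (deriv (φ n)) x) atTop (nhds 0)) := by
  have hK : ∀ n : ℕ, 1 ≤ n → IsKernel n (ρ n) := fun n hn =>
    ⟨hcont n hn, hsupp n hn, hbound n hn, hint n hn⟩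
  have hφK : ∀ n, 1 ≤ n → φ n = primitive (primitive (ρ n)) := fun n hn =>
    funext fun x => (hφ n x).trans ((hK n hn).primitive_primitive_max_zero x)
  have hev : ∀ᶠ n : ℕ in atTop, IsKernel n (ρ n) ∧ φ n = primitive (primitive (ρ n)) :=
    eventually_atTop.2 ⟨1, fun n hn => ⟨hK n hn, hφK n hn⟩⟩
  have hρ := hev.mono fun _ h => h.1
  refine ⟨fun n hn x => ?_, fun x => ⟨?_, ?_, ?_⟩⟩
  · have hf := hK n hn
    rw [hφK n hn, hf.deriv_deriv_primitive_primitive, hf.deriv_primitive_primitive]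
    exact ⟨primitive_nonneg hf.primitive_eq_zero_of_nonpos hf.primitive_nonneg x,
      mul_apply_nonneg hf.primitive_eq_zero_of_nonpos hf.primitive_nonneg x,
      mul_apply_nonneg hf.eq_zero_of_nonpos hf.nonneg x⟩
  · exact (tendsto_primitive_primitive hρ x).congr' (hev.mono fun _ h => by simp only [h.2])
  · exact (tendsto_mul_primitive hρ x).congr'
      (hev.mono fun _ h => by simp only [h.2, h.1.deriv_primitive_primitive])
  · exact (tendsto_mul_apply hρ x).congr'
      (hev.mono fun _ h => by simp only [h.2, h.1.deriv_deriv_primitive_primitive])
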